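/- (Identifiable Counterfactuals, bivariate case.) Let P be a type, let f, g : P → ℝ → ℝ be such that every slice u ↦ f p u and u ↦ g p u is strictly monotone increasing, and let m, m' be Borel probability measures on ℝ satisfying Measure.map (f p) m = Measure.map (g p) m' for every p : P (the two models induce identical conditional distributions of the outcome given every parent value). Assume moreover that for every p : P the CDF of Measure.map (f p) m is injective. Then for all p, p' : P and u, u' : ℝ, if f p u = g p u' then f p' u = g p' u'. In other words, any two such structural models agreeing on all conditional distributions assign the same counterfactual outcome under do(PA = p') to every observation (PA = p, V = v), so the counterfactual outcome is identifiable from the conditional distributions. -/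

import Mathlib

/-!
A strictly increasing map `h` pulls `(-∞, h x]` back to `(-∞, x]`, so the CDF of the outcome
law at the outcome equals the CDF of the noise law at the noise: `F_{h_* m}(h u) = F_m(u)`.
The observation `f p u = g p u'` together with equality of the outcome laws at `p` therefore
gives `F_m(u) = F_{m'}(u')`: both models place their noise at the same quantile. Reading the same
identities backwards at `p'` shows that `f p' u` and `g p' u'` have equal CDF values under the
common outcome law at `p'`, and injectivity of that CDF makes them equal.
-/

open MeasureTheory

/-- The cumulative distribution function of a Borel measure on ℝ:
`F_m(x) = m((-∞, x])`. -/
noncomputable def cdfOf (m : Measure ℝ) (x : ℝ) : ℝ := (m (Set.Iic x)).toReal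

lemma cdfOf_map_apply_of_strictMono {h : ℝ → ℝ} (hh : StrictMono h) (m : Measure ℝ) (x : ℝ) :
    cdfOf (m.map h) (h x) = cdfOf m x := by
  have hpre : h ⁻¹' Set.Iic (h x) = Set.Iic x := by
    ext y
    simp [hh.le_iff_le]
  rw [cdfOf, Measure.map_apply hh.monotone.measurable measurableSet_Iic, hpre, cdfOf]

theorem counterfactual_identifiable_bivariate_general {P : Type*} (f g : P → ℝ → ℝ)
    (hf : ∀ p : P, StrictMono (f p)) (hg : ∀ p : P, StrictMono (g p))
    (m m' : Measure ℝ)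
    (heq : ∀ p : P, Measure.map (f p) m = Measure.map (g p) m')
    (hinj : ∀ p : P, Function.Injective (cdfOf (Measure.map (f p) m)))
    (p p' : P) (u u' : ℝ) (hobs : f p u = g p u') :
    f p' u = g p' u' := by
  have hquantile : cdfOf m u = cdfOf m' u' := by
    rw [← cdfOf_map_apply_of_strictMono (hf p) m u, ← cdfOf_map_apply_of_strictMono (hg p) m' u',
      ← heq p, hobs]
  apply hinj p'
  rw [cdfOf_map_apply_of_strictMono (hf p'), hquantile, heq p',
    cdfOf_map_apply_of_strictMono (hg p')]

/-- Identifiable counterfactuals (bivariate case): two structural models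
`V = f(PA, U)` (noise law `m`) and `V = g(PA, U')` (noise law `m'`) with strictly
increasing slices that induce identical conditional outcome distributions for every
parent value, and whose conditional CDFs are injective, assign the same counterfactual
outcome under `do(PA = p')` to every observation `(PA = p, V = v)`. -/
theorem counterfactual_identifiable_bivariate {P : Type*} (f g : P → ℝ → ℝ)
    (hf : ∀ p : P, StrictMono (f p)) (hg : ∀ p : P, StrictMono (g p))
    (m m' : Measure ℝ) [IsProbabilityMeasure m] [IsProbabilityMeasure m']
    (heq : ∀ p : P, Measure.map (f p) m = Measure.map (g p) m')
    (hinj : ∀ p : P, Function.Injective (cdfOf (Measure.map (f p) m)))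
    (p p' : P) (u u' : ℝ) (hobs : f p u = g p u') :
    f p' u = g p' u' :=
  counterfactual_identifiable_bivariate_general f g hf hg m m' heq hinj p p' u u' hobs
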